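/- Let ζ: H_R(G,η) → H_R(G,η_P) be given by ζ(Φ) = μ∘Φ, where μ(f) = p∘f∘ι, p: V_η → V_M the canonical projection onto the subspace of functions supported in J¹_P and ι the inclusion, for the identification V_η ≅ ind_{J¹_P}^{J¹}(η_P). Then ζ is an injective homomorphism of R-algebras. -/

import Mathlib

open scoped BigOperators

/-- The double coset `H g H` of `g` with respect to an (open) subgroup `H`. -/
def doubleCoset {G : Type*} [Group G] (H : Subgroup G) (g : G) : Set G :=
  {x | ∃ h ∈ H, ∃ h' ∈ H, x = h * g * h'}

/-- A function `Φ : G → End_R(V_σ)` belongs to the Hecke algebra `H_R(G, σ)` if it is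
`σ`-bi-equivariant and its support is contained in a finite union of `H`-double cosets. -/
def IsHeckeFun {G R V : Type*} [Group G] [CommRing R] [AddCommGroup V] [Module R V]
    (H : Subgroup G) (σ : ↥H →* Module.End R V) (Φ : G → Module.End R V) : Prop :=
  (∀ (h h' : ↥H) (g : G), Φ (↑h * g * ↑h') = σ h * Φ g * σ h') ∧
  ∃ S : Finset G, ∀ g : G, Φ g ≠ 0 → ∃ s ∈ S, g ∈ doubleCoset H s

/-- Convolution product `(Φ₁ * Φ₂)(g) = ∑_{x ∈ G/H} Φ₁(x) ∘ Φ₂(x⁻¹ g)`. -/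
noncomputable def heckeConv {G R V : Type*} [Group G] [CommRing R] [AddCommGroup V] [Module R V]
    (H : Subgroup G) (Φ₁ Φ₂ : G → Module.End R V) : G → Module.End R V :=
  fun g => ∑ᶠ c : G ⧸ H, Φ₁ (Quotient.out c) * Φ₂ ((Quotient.out c)⁻¹ * g)

open Classical in
/-- The function supported on `H` given by `σ`. -/
noncomputable def heckeUnit {G R V : Type*} [Group G] [CommRing R] [AddCommGroup V] [Module R V]
    (H : Subgroup G) (σ : ↥H →* Module.End R V) : G → Module.End R V :=
  fun g => if hg : g ∈ H then σ ⟨g, hg⟩ else 0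

/-!
Write `μ = compressEnd p ι`. The identity `∑_{t ∈ J¹/J¹_P} η(t) ∘ ι ∘ p ∘ η(t⁻¹) = 1` is inserted
between the two factors of each term of a convolution over `G/J¹`; by bi-equivariance this turns
`μ(Φ₁ * Φ₂)(g)` into a sum over `G/J¹ × J¹/J¹_P ≃ G/J¹_P` of the terms of `μΦ₁ * μΦ₂`. Inserting the
same identity on both sides of `Φ(x)` expresses `Φ` through `μ ∘ Φ`, whence injectivity.
-/

open Function

section Hecke

variable {G R V : Type*} [Group G] [CommRing R] [AddCommGroup V] [Module R V]
  {H : Subgroup G} {σ : H →* Module.End R V} {Φ : G → Module.End R V}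

theorem IsHeckeFun.apply_mul_coe (hΦ : IsHeckeFun H σ Φ) (x : G) (k : H) :
    Φ (x * k) = Φ x * σ k := by
  simpa using hΦ.1 1 k x

theorem IsHeckeFun.apply_coe_mul (hΦ : IsHeckeFun H σ Φ) (k : H) (x : G) :
    Φ (k * x) = σ k * Φ x := by
  simpa using hΦ.1 k 1 x

theorem IsHeckeFun.conv_summand_mul_coe {Ψ : G → Module.End R V} (hΦ : IsHeckeFun H σ Φ)
    (hΨ : IsHeckeFun H σ Ψ) (g x : G) (k : H) :
    Φ (x * k) * Ψ ((x * k)⁻¹ * g) = Φ x * Ψ (x⁻¹ * g) := by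
  have : (x * k)⁻¹ * g = ↑k⁻¹ * (x⁻¹ * g) := by simp [mul_assoc]
  rw [this, hΦ.apply_mul_coe, hΨ.apply_coe_mul, mul_assoc, ← mul_assoc (σ k), ← map_mul,
    mul_inv_cancel, map_one, one_mul]

end Hecke

section Compress

variable {R Vη VM : Type*} [CommRing R] [AddCommGroup Vη] [Module R Vη] [AddCommGroup VM]
  [Module R VM]

def compressEnd (p : Vη →ₗ[R] VM) (ι : VM →ₗ[R] Vη) :
    Module.End R Vη →ₗ[R] Module.End R VM where
  toFun X := (p ∘ₗ X) ∘ₗ ι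
  map_add' X Y := by ext; simp
  map_smul' r X := by ext; simp

theorem compressEnd_mul_mul (p : Vη →ₗ[R] VM) (ι : VM →ₗ[R] Vη) (X Y : Module.End R Vη) :
    compressEnd p ι (X * (ι ∘ₗ p) * Y) = compressEnd p ι X * compressEnd p ι Y := rfl

end Compress

section Cosets

variable {G : Type*} [Group G] {H K : Subgroup G}

theorem exists_finite_doubleCoset_cover [Finite (H ⧸ K.subgroupOf H)]
    (s : G) : ∃ T : Set G, T.Finite ∧ doubleCoset H s ⊆ ⋃ t ∈ T, doubleCoset K t := by
  set reps : Set G := Set.range fun c : H ⧸ K.subgroupOf H => (c.out : G)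
  have mem_reps : ∀ h ∈ H, ∃ a ∈ reps, a⁻¹ * h ∈ K := fun h hh =>
    ⟨_, ⟨QuotientGroup.mk ⟨h, hh⟩, rfl⟩,
      Subgroup.mem_subgroupOf.1 (QuotientGroup.leftRel_apply.1 (Quotient.mk_out _))⟩
  refine ⟨(fun ab : G × G => ab.1⁻¹ * s * ab.2) '' reps ×ˢ reps,
    ((Set.finite_range _).prod (Set.finite_range _)).image _, ?_⟩
  rintro _ ⟨h, hh, h', hh', rfl⟩
  obtain ⟨a, ha, hah⟩ := mem_reps h⁻¹ (H.inv_mem hh)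
  obtain ⟨b, hb, hbh⟩ := mem_reps h' hh'
  refine Set.mem_biUnion ⟨(a, b), ⟨ha, hb⟩, rfl⟩ ⟨h * a, ?_, b⁻¹ * h', hbh, by group⟩
  simpa using K.inv_mem hah

theorem quotientEquivProdOfLE_symm_apply_eq_mk (hle : K ≤ H) (d : G ⧸ H)
    (t : H ⧸ K.subgroupOf H) :
    (Subgroup.quotientEquivProdOfLE hle).symm (d, t) = QuotientGroup.mk (d.out * t.out) := by
  conv_lhs => rw [← QuotientGroup.out_eq' t]
  rfl

theorem finsum_quotient_eq_finsum_sum {M : Type*} [AddCommMonoid M] (hle : K ≤ H)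
    [Fintype (H ⧸ K.subgroupOf H)] {F : G → M} (hF : ∀ x, ∀ k : K, F (x * k) = F x)
    (hfin : (QuotientGroup.mk '' support F : Set (G ⧸ H)).Finite) :
    ∑ᶠ c : G ⧸ K, F c.out = ∑ᶠ d : G ⧸ H, ∑ t : H ⧸ K.subgroupOf H, F (d.out * t.out) := by
  have F_out : ∀ x, F (QuotientGroup.mk x : G ⧸ K).out = F x := fun x => by
    obtain ⟨k, hk⟩ := QuotientGroup.mk_out_eq_mul K x
    rw [hk, hF]
  have hsupp : (support fun q : (G ⧸ H) × (H ⧸ K.subgroupOf H) =>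
      F (q.1.out * q.2.out)).Finite := by
    refine (hfin.prod Set.finite_univ).subset fun q hq => ⟨?_, trivial⟩
    refine ⟨_, hq, ?_⟩
    rw [QuotientGroup.mk_mul_of_mem _ (q.2.out).2, QuotientGroup.out_eq']
  rw [← finsum_comp_equiv (Subgroup.quotientEquivProdOfLE hle).symm]
  have F_symm : ∀ q, F ((Subgroup.quotientEquivProdOfLE hle).symm q).out =
      F (q.1.out * q.2.out) := fun ⟨d, t⟩ => by
    rw [quotientEquivProdOfLE_symm_apply_eq_mk, F_out]
  simp only [F_symm, finsum_curry _ hsupp, finsum_eq_sum_of_fintype]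

end Cosets

theorem isCompact_doubleCoset {G : Type*} [Group G] [TopologicalSpace G] [IsTopologicalGroup G]
    {H : Subgroup G} (hH : IsCompact (H : Set G)) (s : G) : IsCompact (doubleCoset H s) := by
  have : doubleCoset H s = (fun q : G × G => q.1 * s * q.2) '' (H ×ˢ H : Set (G × G)) := by
    ext x
    constructor
    · rintro ⟨h, hh, h', hh', rfl⟩
      exact ⟨(h, h'), ⟨hh, hh'⟩, rfl⟩
    · rintro ⟨⟨h, h'⟩, ⟨hh, hh'⟩, rfl⟩
      exact ⟨h, hh, h', hh', rfl⟩
  rw [this]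
  exact (hH.prod hH).image (by fun_prop)

theorem IsHeckeFun.finite_image_mk_support {G R V : Type*} [Group G] [TopologicalSpace G]
    [IsTopologicalGroup G] [CommRing R] [AddCommGroup V] [Module R V] {H : Subgroup G}
    {σ : H →* Module.End R V} {Φ : G → Module.End R V} (hΦ : IsHeckeFun H σ Φ)
    (hopen : IsOpen (H : Set G)) (hcpt : IsCompact (H : Set G)) :
    (QuotientGroup.mk '' support Φ : Set (G ⧸ H)).Finite := by
  have := QuotientGroup.discreteTopology hopen
  obtain ⟨S, hS⟩ := hΦ.2
  have hcover : support Φ ⊆ ⋃ s ∈ S, doubleCoset H s := fun g hg => by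
    obtain ⟨s, hs, hg⟩ := hS g hg
    exact Set.mem_biUnion hs hg
  refine IsCompact.finite_of_discrete ?_ |>.subset (Set.image_mono hcover)
  exact (S.isCompact_biUnion fun s _ => isCompact_doubleCoset hcpt s).image
    QuotientGroup.continuous_mk

section Compression

variable {G R Vη VM : Type*} [Group G] [CommRing R] [AddCommGroup Vη] [Module R Vη]
  [AddCommGroup VM] [Module R VM] {H K : Subgroup G} {η : H →* Module.End R Vη}
  {ηP : K →* Module.End R VM} {p : Vη →ₗ[R] VM} {ι : VM →ₗ[R] Vη}
  {Φ Φ₁ Φ₂ : G → Module.End R Vη}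

theorem isHeckeFun_compressEnd (hle : K ≤ H)
    (hcomm₁ : ∀ k : K, η ⟨k, hle k.2⟩ ∘ₗ ι = ι ∘ₗ ηP k)
    (hcomm₂ : ∀ k : K, p ∘ₗ η ⟨k, hle k.2⟩ = ηP k ∘ₗ p) [Finite (H ⧸ K.subgroupOf H)]
    (hΦ : IsHeckeFun H η Φ) : IsHeckeFun K ηP fun g => compressEnd p ι (Φ g) := by
  refine ⟨fun k k' g => ?_, ?_⟩
  · calc compressEnd p ι (Φ (k * g * k'))
        = (p ∘ₗ η ⟨k, hle k.2⟩) ∘ₗ Φ g ∘ₗ (η ⟨k', hle k'.2⟩ ∘ₗ ι) := by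
          rw [hΦ.1 ⟨k, hle k.2⟩ ⟨k', hle k'.2⟩]; rfl
      _ = ηP k * compressEnd p ι (Φ g) * ηP k' := by rw [hcomm₁, hcomm₂]; rfl
  · choose T hT hcover using exists_finite_doubleCoset_cover (K := K) (H := H)
    obtain ⟨S, hS⟩ := hΦ.2
    classical
    refine ⟨S.biUnion fun s => (hT s).toFinset, fun g hg => ?_⟩
    have hΦg : Φ g ≠ 0 := fun h => hg (by simp only [h, map_zero])
    obtain ⟨s, hs, hgs⟩ := hS g hΦg
    obtain ⟨t, ht, hgt⟩ := Set.mem_iUnion₂.1 (hcover s hgs)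
    exact ⟨t, Finset.mem_biUnion.2 ⟨s, hs, (hT s).mem_toFinset.2 ht⟩, hgt⟩

variable [Fintype (H ⧸ K.subgroupOf H)]

theorem IsHeckeFun.eq_sum_compressEnd
    (hsum : ∑ t : H ⧸ K.subgroupOf H, η t.out * (ι ∘ₗ p) * η t.out⁻¹ = 1)
    (hΦ : IsHeckeFun H η Φ) (x : G) :
    Φ x = ∑ s : H ⧸ K.subgroupOf H, ∑ t : H ⧸ K.subgroupOf H,
      η s.out * (ι ∘ₗ compressEnd p ι (Φ (↑s.out⁻¹ * x * t.out)) ∘ₗ p) * η t.out⁻¹ := by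
  conv_lhs => rw [← one_mul (Φ x), ← mul_one (1 * Φ x), ← hsum]
  simp only [Finset.sum_mul, Finset.mul_sum]
  rw [Finset.sum_comm]
  refine Finset.sum_congr rfl fun s _ => Finset.sum_congr rfl fun t _ => ?_
  rw [hΦ.1]
  rfl

theorem IsHeckeFun.eq_of_compressEnd_eq
    (hsum : ∑ t : H ⧸ K.subgroupOf H, η t.out * (ι ∘ₗ p) * η t.out⁻¹ = 1)
    (hΦ₁ : IsHeckeFun H η Φ₁) (hΦ₂ : IsHeckeFun H η Φ₂)
    (h : ∀ g, compressEnd p ι (Φ₁ g) = compressEnd p ι (Φ₂ g)) : Φ₁ = Φ₂ := by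
  funext x
  rw [hΦ₁.eq_sum_compressEnd hsum, hΦ₂.eq_sum_compressEnd hsum]
  simp only [h]

theorem compressEnd_mul_eq_sum
    (hsum : ∑ t : H ⧸ K.subgroupOf H, η t.out * (ι ∘ₗ p) * η t.out⁻¹ = 1)
    (hΦ₁ : IsHeckeFun H η Φ₁) (hΦ₂ : IsHeckeFun H η Φ₂) (x y : G) :
    compressEnd p ι (Φ₁ x * Φ₂ y) = ∑ t : H ⧸ K.subgroupOf H,
      compressEnd p ι (Φ₁ (x * t.out)) * compressEnd p ι (Φ₂ (↑t.out⁻¹ * y)) := by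
  rw [← mul_one (Φ₁ x), ← hsum]
  simp only [Finset.mul_sum, Finset.sum_mul, map_sum]
  refine Finset.sum_congr rfl fun t _ => ?_
  rw [hΦ₁.apply_mul_coe, hΦ₂.apply_coe_mul, ← compressEnd_mul_mul]
  simp only [mul_assoc]

theorem compressEnd_heckeConv (hle : K ≤ H)
    (hcomm₁ : ∀ k : K, η ⟨k, hle k.2⟩ ∘ₗ ι = ι ∘ₗ ηP k)
    (hcomm₂ : ∀ k : K, p ∘ₗ η ⟨k, hle k.2⟩ = ηP k ∘ₗ p)
    (hsum : ∑ t : H ⧸ K.subgroupOf H, η t.out * (ι ∘ₗ p) * η t.out⁻¹ = 1)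
    (hΦ₁ : IsHeckeFun H η Φ₁) (hΦ₂ : IsHeckeFun H η Φ₂)
    (hfin : (QuotientGroup.mk '' support Φ₁ : Set (G ⧸ H)).Finite) (g : G) :
    compressEnd p ι (heckeConv H Φ₁ Φ₂ g) =
      heckeConv K (fun x => compressEnd p ι (Φ₁ x)) (fun x => compressEnd p ι (Φ₂ x)) g := by
  set F : G → Module.End R VM := fun x =>
    compressEnd p ι (Φ₁ x) * compressEnd p ι (Φ₂ (x⁻¹ * g))
  have F_mul : ∀ x, ∀ k : K, F (x * k) = F x :=
    ((isHeckeFun_compressEnd hle hcomm₁ hcomm₂ hΦ₁).conv_summand_mul_coe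
      (isHeckeFun_compressEnd hle hcomm₁ hcomm₂ hΦ₂) g)
  have support_F : support F ⊆ support Φ₁ := fun x hx h0 =>
    hx (by simp only [F, h0, map_zero, zero_mul])
  have support_summand : support (fun d : G ⧸ H => Φ₁ d.out * Φ₂ (d.out⁻¹ * g)) ⊆
      QuotientGroup.mk '' support Φ₁ := fun d hd =>
    ⟨d.out, fun h0 => hd (by simp only [h0, zero_mul]), QuotientGroup.out_eq' d⟩
  calc compressEnd p ι (heckeConv H Φ₁ Φ₂ g)
      = ∑ᶠ d : G ⧸ H, compressEnd p ι (Φ₁ d.out * Φ₂ (d.out⁻¹ * g)) :=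
        map_finsum _ (hfin.subset support_summand)
    _ = ∑ᶠ d : G ⧸ H, ∑ t : H ⧸ K.subgroupOf H, F (d.out * t.out) := by
        refine finsum_congr fun d => ?_
        rw [compressEnd_mul_eq_sum hsum hΦ₁ hΦ₂]
        simp only [F, mul_inv_rev, mul_assoc, InvMemClass.coe_inv]
    _ = ∑ᶠ c : G ⧸ K, F c.out :=
        (finsum_quotient_eq_finsum_sum hle F_mul (hfin.subset (Set.image_mono support_F))).symm

end Compression

open Classical in
theorem statement14_general {G R Vη VM : Type*} [Group G] [TopologicalSpace G] [IsTopologicalGroup G]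
    [CommRing R] [AddCommGroup Vη] [Module R Vη] [AddCommGroup VM] [Module R VM]
    (J1 J1P : Subgroup G) (hle : J1P ≤ J1)
    (hJ1open : IsOpen (J1 : Set G)) (hJ1cpt : IsCompact (J1 : Set G))
    (hJ1Popen : IsOpen (J1P : Set G))
    (η : ↥J1 →* Module.End R Vη) (ηP : ↥J1P →* Module.End R VM)
    (p : Vη →ₗ[R] VM) (ι : VM →ₗ[R] Vη)
    -- `η(j) ∘ ι = ι ∘ η_P(j)` and `p ∘ η(j) = η_P(j) ∘ p` for `j ∈ J¹_P`
    (hcomm₁ : ∀ j : ↥J1P, (η ⟨(j : G), hle j.2⟩) ∘ₗ ι = ι ∘ₗ (ηP j))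
    (hcomm₂ : ∀ j : ↥J1P, p ∘ₗ (η ⟨(j : G), hle j.2⟩) = (ηP j) ∘ₗ p)
    -- `∑_{j ∈ J¹/J¹_P} η(j) ∘ ι ∘ p ∘ η(j⁻¹) = id`
    (hsum : ∀ φ : Vη, ∑ᶠ c : ↥J1 ⧸ J1P.subgroupOf J1,
      (η (Quotient.out c)) (ι (p ((η (Quotient.out c)⁻¹) φ))) = φ) :
    -- `ζ` maps `H_R(G,η)` into `H_R(G,η_P)`
    (∀ Φ, IsHeckeFun J1 η Φ → IsHeckeFun J1P ηP (fun g => (p ∘ₗ Φ g) ∘ₗ ι)) ∧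
    -- `ζ` is multiplicative
    (∀ Φ₁ Φ₂, IsHeckeFun J1 η Φ₁ → IsHeckeFun J1 η Φ₂ →
      (fun g => (p ∘ₗ heckeConv J1 Φ₁ Φ₂ g) ∘ₗ ι) =
        heckeConv J1P (fun g => (p ∘ₗ Φ₁ g) ∘ₗ ι) (fun g => (p ∘ₗ Φ₂ g) ∘ₗ ι)) ∧
    -- `ζ` is `R`-linear
    (∀ Φ₁ Φ₂ : G → Module.End R Vη,
      (fun g => (p ∘ₗ (Φ₁ + Φ₂) g) ∘ₗ ι) =
        (fun g => (p ∘ₗ Φ₁ g) ∘ₗ ι) + fun g => (p ∘ₗ Φ₂ g) ∘ₗ ι) ∧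
    (∀ (r : R) (Φ : G → Module.End R Vη),
      (fun g => (p ∘ₗ (r • Φ) g) ∘ₗ ι) = r • fun g => (p ∘ₗ Φ g) ∘ₗ ι) ∧
    -- `ζ` is injective
    (∀ Φ₁ Φ₂, IsHeckeFun J1 η Φ₁ → IsHeckeFun J1 η Φ₂ →
      (∀ g : G, (p ∘ₗ Φ₁ g) ∘ₗ ι = (p ∘ₗ Φ₂ g) ∘ₗ ι) → Φ₁ = Φ₂) := by
  have : CompactSpace J1 := isCompact_iff_compactSpace.mp hJ1cpt
  have : Finite (J1 ⧸ J1P.subgroupOf J1) :=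
    Subgroup.quotient_finite_of_isOpen _ (Subgroup.subgroupOf_isOpen J1 J1P hJ1Popen)
  have := Fintype.ofFinite (J1 ⧸ J1P.subgroupOf J1)
  have hsum_one : ∑ t : J1 ⧸ J1P.subgroupOf J1, η t.out * (ι ∘ₗ p) * η t.out⁻¹ = 1 := by
    ext φ
    simpa [finsum_eq_sum_of_fintype] using hsum φ
  refine ⟨fun Φ hΦ => isHeckeFun_compressEnd hle hcomm₁ hcomm₂ hΦ, fun Φ₁ Φ₂ hΦ₁ hΦ₂ => ?_,
    fun Φ₁ Φ₂ => funext fun g => map_add (compressEnd p ι) (Φ₁ g) (Φ₂ g),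
    fun r Φ => funext fun g => map_smul (compressEnd p ι) r (Φ g),
    fun Φ₁ Φ₂ hΦ₁ hΦ₂ => hΦ₁.eq_of_compressEnd_eq hsum_one hΦ₂⟩
  exact funext (compressEnd_heckeConv hle hcomm₁ hcomm₂ hsum_one hΦ₁ hΦ₂
    (hΦ₁.finite_image_mk_support hJ1open hJ1cpt))

open Classical in
/-- In the induced-model setting `η = ind_{J¹_P}^{J¹}(η_P)`, with `p : V_η → V_M` the
canonical projection and `ι : V_M → V_η` the inclusion satisfying the key compatibility
facts, the map `ζ : H_R(G,η) → H_R(G,η_P)`, `ζ(Φ) = μ ∘ Φ` with `μ(f) = p ∘ f ∘ ι`, is an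
injective homomorphism of `R`-algebras. -/
theorem statement14 {G R Vη VM : Type*} [Group G] [TopologicalSpace G] [IsTopologicalGroup G]
    [LocallyCompactSpace G] [TotallyDisconnectedSpace G]
    [CommRing R] [AddCommGroup Vη] [Module R Vη] [AddCommGroup VM] [Module R VM]
    (J1 J1P : Subgroup G) (hle : J1P ≤ J1)
    (hJ1open : IsOpen (J1 : Set G)) (hJ1cpt : IsCompact (J1 : Set G))
    (hJ1Popen : IsOpen (J1P : Set G))
    (η : ↥J1 →* Module.End R Vη) (ηP : ↥J1P →* Module.End R VM)
    (p : Vη →ₗ[R] VM) (ι : VM →ₗ[R] Vη)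
    -- `η(j) ∘ ι = ι ∘ η_P(j)` and `p ∘ η(j) = η_P(j) ∘ p` for `j ∈ J¹_P`
    (hcomm₁ : ∀ j : ↥J1P, (η ⟨(j : G), hle j.2⟩) ∘ₗ ι = ι ∘ₗ (ηP j))
    (hcomm₂ : ∀ j : ↥J1P, p ∘ₗ (η ⟨(j : G), hle j.2⟩) = (ηP j) ∘ₗ p)
    -- `p ∘ η(j) ∘ ι = η_P(j)` if `j ∈ J¹_P` and `0` otherwise
    (hmid : ∀ j : ↥J1, p ∘ₗ (η j) ∘ₗ ι =
      if h : (j : G) ∈ J1P then (ηP ⟨(j : G), h⟩ : Module.End R VM) else 0)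
    -- `∑_{j ∈ J¹/J¹_P} η(j) ∘ ι ∘ p ∘ η(j⁻¹) = id`
    (hsum : ∀ φ : Vη, ∑ᶠ c : ↥J1 ⧸ J1P.subgroupOf J1,
      (η (Quotient.out c)) (ι (p ((η (Quotient.out c)⁻¹) φ))) = φ) :
    -- `ζ` maps `H_R(G,η)` into `H_R(G,η_P)`
    (∀ Φ, IsHeckeFun J1 η Φ → IsHeckeFun J1P ηP (fun g => (p ∘ₗ Φ g) ∘ₗ ι)) ∧
    -- `ζ` is multiplicative
    (∀ Φ₁ Φ₂, IsHeckeFun J1 η Φ₁ → IsHeckeFun J1 η Φ₂ →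
      (fun g => (p ∘ₗ heckeConv J1 Φ₁ Φ₂ g) ∘ₗ ι) =
        heckeConv J1P (fun g => (p ∘ₗ Φ₁ g) ∘ₗ ι) (fun g => (p ∘ₗ Φ₂ g) ∘ₗ ι)) ∧
    -- `ζ` is `R`-linear
    (∀ Φ₁ Φ₂ : G → Module.End R Vη,
      (fun g => (p ∘ₗ (Φ₁ + Φ₂) g) ∘ₗ ι) =
        (fun g => (p ∘ₗ Φ₁ g) ∘ₗ ι) + fun g => (p ∘ₗ Φ₂ g) ∘ₗ ι) ∧
    (∀ (r : R) (Φ : G → Module.End R Vη),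
      (fun g => (p ∘ₗ (r • Φ) g) ∘ₗ ι) = r • fun g => (p ∘ₗ Φ g) ∘ₗ ι) ∧
    -- `ζ` is injective
    (∀ Φ₁ Φ₂, IsHeckeFun J1 η Φ₁ → IsHeckeFun J1 η Φ₂ →
      (∀ g : G, (p ∘ₗ Φ₁ g) ∘ₗ ι = (p ∘ₗ Φ₂ g) ∘ₗ ι) → Φ₁ = Φ₂) :=
  statement14_general J1 J1P hle hJ1open hJ1cpt hJ1Popen η ηP p ι hcomm₁ hcomm₂ hsum
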